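/- arXiv:1906.03768 — 4 statements merged into one kernel-verified Lean document; each statement's English description precedes it below -/
import Mathlib

section
/- In the setting of the exact variance identity for θ̂^{L1} (pairs (y_d, x_d), d ≤ n1, and (Z_e, x'_e), e ≤ n2, mutually independent; y_d ∈ {0,1} with E[y_d x_d] = p m θ and E[y_d x_d²] = p m θ(1 − θ + mθ); Z_e ∈ {0, K} with E[Z_e x'_e] = q K m l and E[Z_e² x'_e²] = q K² L; θ̂^{L1} := (Σ_d y_d x_d + Σ_e Z_e x'_e)/((p n1 + q K n2) m)), assume additionally that 0 ≤ L ≤ m², 0 ≤ θ ≤ 1, 0 ≤ l ≤ 1, p > 0 and q·K > 0. Then Var(θ̂^{L1}) ≤ 2·max(1, K) / (min(p, q·K) · (n1 + n2)). -/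
open MeasureTheory ProbabilityTheory Finset

/-!
The estimator is a constant multiple of a sum of `n1 + n2` independent square-integrable terms,
so its variance is the square of that constant times the sum of the variances of the terms. Each
variance is at most the corresponding second moment: `p m θ (1 - θ + m θ) ≤ p m²` for a positive
document (where `y² = y`), and `q K² L ≤ (q K) K m²` for a negative one. Hence the variance is at
most `(n1 p + n2 (q K) K) / (p n1 + q K n2)² ≤ max(1, K) / (p n1 + q K n2)`, and
`p n1 + q K n2 ≥ min(p, q K) (n1 + n2)`.
-/

namespace ProbabilityTheory

variable {Ω : Type*} [MeasurableSpace Ω] {μ : Measure Ω}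

lemma variance_const_mul_sum_le {ι : Type*} [Fintype ι] [IsProbabilityMeasure μ]
    {W : ι → Ω → ℝ} (hindep : iIndepFun W μ) (hW : ∀ i, MemLp (W i) 2 μ)
    {b : ι → ℝ} (hb : ∀ i, variance (W i) μ ≤ b i) (c : ℝ) :
    variance (fun ω => c * ∑ i, W i ω) μ ≤ c ^ 2 * ∑ i, b i := by
  have hsum : variance (∑ i, W i) μ = ∑ i, variance (W i) μ :=
    IndepFun.variance_sum (fun i _ => hW i) fun i _ j _ hij => hindep.indepFun hij
  simp_rw [← Finset.sum_apply]
  rw [variance_const_mul, hsum]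
  gcongr with i
  exact hb i

lemma variance_mul_le_integral_mul_sq [IsProbabilityMeasure μ] {Y X : Ω → ℝ}
    (hY : ∀ ω, Y ω = 0 ∨ Y ω = 1) (hYX : AEStronglyMeasurable (fun ω => Y ω * X ω) μ) :
    variance (fun ω => Y ω * X ω) μ ≤ ∫ ω, Y ω * X ω ^ 2 ∂μ := by
  refine (variance_le_expectation_sq hYX).trans_eq (integral_congr_ae ?_)
  filter_upwards with ω
  rcases hY ω with h | h <;> simp [h]

end ProbabilityTheory

lemma mul_mul_one_sub_add_mul_le {p θ m : ℝ} (hp : 0 ≤ p) (hθ : θ ∈ Set.Icc (0 : ℝ) 1)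
    (hm : 1 ≤ m) : p * m * θ * (1 - θ + m * θ) ≤ p * m ^ 2 := by
  obtain ⟨hθ0, hθ1⟩ := hθ
  have : θ * (1 - θ + m * θ) ≤ m := by
    nlinarith [mul_nonneg hθ0 (sub_nonneg.2 hθ1), mul_nonneg (sub_nonneg.2 hm) (sub_nonneg.2 hθ1)]
  have hpm : 0 ≤ p * m := mul_nonneg hp (zero_le_one.trans hm)
  nlinarith [mul_le_mul_of_nonneg_left this hpm]

lemma min_mul_add_le_mul_add_mul (p c a b : ℝ) (ha : 0 ≤ a) (hb : 0 ≤ b) :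
    min p c * (a + b) ≤ p * a + c * b := by
  have := mul_le_mul_of_nonneg_right (min_le_left p c) ha
  have := mul_le_mul_of_nonneg_right (min_le_right p c) hb
  linarith

lemma mul_add_mul_mul_le_max_mul {p c a b : ℝ} (hpa : 0 ≤ p * a) (hcb : 0 ≤ c * b) (K : ℝ) :
    p * a + c * b * K ≤ max 1 K * (p * a + c * b) := by
  have := mul_le_mul_of_nonneg_left (le_max_left 1 K) hpa
  have := mul_le_mul_of_nonneg_left (le_max_right 1 K) hcb
  linarith

lemma inv_sq_mul_le_max_div_min {p c a b : ℝ} (hp : 0 < p) (hc : 0 < c) (ha : 0 ≤ a)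
    (hb : 0 ≤ b) (hab : 0 < a + b) (K : ℝ) :
    (p * a + c * b)⁻¹ ^ 2 * (p * a + c * b * K) ≤ max 1 K / (min p c * (a + b)) := by
  have hden : 0 < min p c * (a + b) := mul_pos (lt_min hp hc) hab
  have hA : 0 < p * a + c * b := hden.trans_le (min_mul_add_le_mul_add_mul p c a b ha hb)
  calc (p * a + c * b)⁻¹ ^ 2 * (p * a + c * b * K)
      ≤ (p * a + c * b)⁻¹ ^ 2 * (max 1 K * (p * a + c * b)) := by
        gcongr
        exact mul_add_mul_mul_le_max_mul (by positivity) (by positivity) K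
    _ = max 1 K / (p * a + c * b) := by field_simp
    _ ≤ max 1 K / (min p c * (a + b)) := by
        gcongr
        exact min_mul_add_le_mul_add_mul p c a b ha hb

theorem L1_estimator_variance_order_general {Ω : Type*} [MeasurableSpace Ω]
    (μ : Measure Ω) [IsProbabilityMeasure μ]
    (m : ℕ) (hm : 1 ≤ m) (θ p q K L : ℝ)
    (hθ : θ ∈ Set.Icc (0 : ℝ) 1)
    (hp : p ∈ Set.Ioc (0 : ℝ) 1) (hq : q ∈ Set.Ioc (0 : ℝ) 1)
    (hLm : L ≤ (m : ℝ) ^ 2)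
    (hqK : 0 < q * K)
    (n1 n2 : ℕ) (hn1 : 1 ≤ n1)
    (Y X : Fin n1 → Ω → ℝ) (Z X' : Fin n2 → Ω → ℝ)
    (hindep : iIndepFun
      (Sum.elim (fun d ω => (Y d ω, X d ω)) (fun e ω => (Z e ω, X' e ω))) μ)
    (hY01 : ∀ d ω, Y d ω = 0 ∨ Y d ω = 1)
    (hYXmem : ∀ d, MemLp (fun ω => Y d ω * X d ω) 2 μ)
    (hYX2 : ∀ d, ∫ ω, Y d ω * (X d ω) ^ 2 ∂μ = p * m * θ * (1 - θ + m * θ))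
    (hZXmem : ∀ e, MemLp (fun ω => Z e ω * X' e ω) 2 μ)
    (hZX2 : ∀ e, ∫ ω, (Z e ω) ^ 2 * (X' e ω) ^ 2 ∂μ = q * K ^ 2 * L) :
    variance (fun ω => (∑ d, Y d ω * X d ω + ∑ e, Z e ω * X' e ω)
        / ((p * n1 + q * K * n2) * m)) μ
      ≤ 2 * max 1 K / (min p (q * K) * ((n1 : ℝ) + n2)) := by
  have hm' : (1 : ℝ) ≤ m := by exact_mod_cast hm
  have hn : (0 : ℝ) < n1 + n2 := by norm_cast; omega
  set W : Fin n1 ⊕ Fin n2 → Ω → ℝ :=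
    Sum.elim (fun d ω => Y d ω * X d ω) (fun e ω => Z e ω * X' e ω)
  have hWindep : iIndepFun W μ := by
    convert hindep.comp (fun _ x => x.1 * x.2) fun _ => measurable_fst.mul measurable_snd
      using 1
    ext (d | e) ω <;> rfl
  have hvar (i) :
      variance (W i) μ ≤ Sum.elim (fun _ => p * m ^ 2) (fun _ => q * K ^ 2 * m ^ 2) i := by
    rcases i with d | e
    · calc variance (W (.inl d)) μ ≤ p * m * θ * (1 - θ + m * θ) :=
            (variance_mul_le_integral_mul_sq (hY01 d) (hYXmem d).1).trans_eq (hYX2 d)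
        _ ≤ p * m ^ 2 := mul_mul_one_sub_add_mul_le hp.1.le hθ hm'
    · calc variance (W (.inr e)) μ ≤ q * K ^ 2 * L := by
            refine (variance_le_expectation_sq (hZXmem e).1).trans_eq ?_
            simp only [← hZX2 e, Pi.pow_apply, mul_pow]
        _ ≤ q * K ^ 2 * m ^ 2 := by have := hq.1.le; gcongr
  have hest : (fun ω => (∑ d, Y d ω * X d ω + ∑ e, Z e ω * X' e ω)
      / ((p * n1 + q * K * n2) * m)) = fun ω => ((p * n1 + q * K * n2) * m)⁻¹ * ∑ i, W i ω := by
    ext ω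
    rw [Fintype.sum_sum_type, div_eq_inv_mul]
    rfl
  rw [hest]
  calc _ ≤ ((p * n1 + q * K * n2) * m)⁻¹ ^ 2 * (n1 * (p * m ^ 2) + n2 * (q * K ^ 2 * m ^ 2)) := by
        simpa [Fintype.sum_sum_type] using
          variance_const_mul_sum_le hWindep (Sum.rec hYXmem hZXmem) hvar _
    _ = (p * n1 + q * K * n2)⁻¹ ^ 2 * (p * n1 + q * K * n2 * K) := by
        field_simp
    _ ≤ max 1 K / (min p (q * K) * (n1 + n2)) :=
        inv_sq_mul_le_max_div_min hp.1 hqK (by positivity) (by positivity) hn K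
    _ ≤ 2 * max 1 K / (min p (q * K) * (n1 + n2)) :=
        div_le_div_of_nonneg_right (by linarith [le_max_left 1 K])
          (mul_pos (lt_min hp.1 hqK) hn).le

/-- Order bound on the variance of the L1 estimator (Theorem 2, part 2): under
the moment and independence hypotheses of the exact variance identity, and
assuming additionally `0 ≤ L ≤ m²`, `0 ≤ θ ≤ 1`, `0 ≤ l ≤ 1`, `p > 0` and
`q K > 0`, the variance of
`θ̂ = (∑ d, Y d X d + ∑ e, Z e X' e) / ((p n1 + q K n2) m)` is at most
`2 max(1, K) / (min(p, q K) (n1 + n2))`, i.e. of order `O(1 / (|S₁| + |S₂|))`. -/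
theorem L1_estimator_variance_order {Ω : Type*} [MeasurableSpace Ω]
    (μ : Measure Ω) [IsProbabilityMeasure μ]
    (m : ℕ) (hm : 1 ≤ m) (θ l p q K L : ℝ)
    (hθ : θ ∈ Set.Icc (0 : ℝ) 1) (hl : l ∈ Set.Icc (0 : ℝ) 1)
    (hp : p ∈ Set.Ioc (0 : ℝ) 1) (hq : q ∈ Set.Ioc (0 : ℝ) 1)
    (hK : 0 < K) (hL : 0 ≤ L) (hLm : L ≤ (m : ℝ) ^ 2)
    (hqK : 0 < q * K)
    (n1 n2 : ℕ) (hn1 : 1 ≤ n1) (hn2 : 1 ≤ n2)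
    (Y X : Fin n1 → Ω → ℝ) (Z X' : Fin n2 → Ω → ℝ)
    (hindep : iIndepFun
      (Sum.elim (fun d ω => (Y d ω, X d ω)) (fun e ω => (Z e ω, X' e ω))) μ)
    (hY01 : ∀ d ω, Y d ω = 0 ∨ Y d ω = 1)
    (hZ0K : ∀ e ω, Z e ω = 0 ∨ Z e ω = K)
    (hYXmem : ∀ d, MemLp (fun ω => Y d ω * X d ω) 2 μ)
    (hYX : ∀ d, ∫ ω, Y d ω * X d ω ∂μ = p * m * θ)
    (hYX2 : ∀ d, ∫ ω, Y d ω * (X d ω) ^ 2 ∂μ = p * m * θ * (1 - θ + m * θ))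
    (hZXmem : ∀ e, MemLp (fun ω => Z e ω * X' e ω) 2 μ)
    (hZX : ∀ e, ∫ ω, Z e ω * X' e ω ∂μ = q * K * m * l)
    (hZX2 : ∀ e, ∫ ω, (Z e ω) ^ 2 * (X' e ω) ^ 2 ∂μ = q * K ^ 2 * L) :
    variance (fun ω => (∑ d, Y d ω * X d ω + ∑ e, Z e ω * X' e ω)
        / ((p * n1 + q * K * n2) * m)) μ
      ≤ 2 * max 1 K / (min p (q * K) * ((n1 : ℝ) + n2)) :=
  L1_estimator_variance_order_general μ m hm θ p q K L hθ hp hq hLm hqK n1 n2 hn1 Y X Z X' hindep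
    hY01 hYXmem hYX2 hZXmem hZX2
end

section
/- Fix k ≥ 2 classes with parameters θ_1, …, θ_k in the probability simplex of ℝ^v, m ≥ 1, t > 1, a word index j and a class index i. Let there be n ≥ 1 independent real random variables x_1, …, x_n (the counts of word j in n documents) together with fixed label functions y_i, z_i : {1, …, n} → {0, 1}: each document d is either positively labelled into exactly one class l (and then E[x_d] = m·θ_{l j}) or negatively labelled as not in exactly one class l (and then E[x_d] = m·M_l/(k − 1), where M_l := Σ_{b=1}^k θ_{b j} − θ_{l j}). Let C_l and D_l be the numbers of documents positively labelled into class l and negatively labelled as not in class l, respectively, with Σ_l (C_l + D_l) = n; set p_l = C_l/n, q_l = D_l/n. Define θ̂^{L2} := Σ_{d=1}^n (y_i(d) + t − z_i(d))·x_d / (m·n·(p_i − q_i + t)). Then E[θ̂^{L2}] = (t·Σ_{l=1}^k p_l θ_{l j} + p_i θ_{i j} + t·Σ_{l=1}^k q_l M_l/(k − 1) − q_i M_i/(k − 1)) / (p_i − q_i + t). -/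
open MeasureTheory ProbabilityTheory Finset

/-- Number of documents positively labelled into class `l`. -/
def posCount {n k : ℕ} (pos : Fin n → Bool) (lab : Fin n → Fin k) (l : Fin k) : ℕ :=
  (Finset.univ.filter fun d => pos d = true ∧ lab d = l).card

/-- Number of documents negatively labelled as not in class `l`. -/
def negCount {n k : ℕ} (pos : Fin n → Bool) (lab : Fin n → Fin k) (l : Fin k) : ℕ :=
  (Finset.univ.filter fun d => pos d = false ∧ lab d = l).card

/-!
By linearity of expectation, `E[∑ d, w_d x_d] = ∑ d, w_d E[x_d]`, where both the weight
`w_d` and the mean `E[x_d]` depend on document `d` only through its labelling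
`(pos d, lab d)`. Grouping the documents by labelling turns this sum into
`m (t ∑ C_l θ_l + C_i θ_i + t ∑ D_l M_l/(k-1) - D_i M_i/(k-1))`, and the factor `m n` of the
denominator cancels against `m` and the normalisation `p_l = C_l/n`, `q_l = D_l/n`.
-/

section Labels

variable {n k : ℕ} (pos : Fin n → Bool) (lab : Fin n → Fin k)

theorem sum_comp_pos_lab {M : Type*} [AddCommMonoid M] (f : Bool → Fin k → M) :
    ∑ d, f (pos d) (lab d)
      = ∑ l, (posCount pos lab l • f true l + negCount pos lab l • f false l) := by
  rw [← sum_fiberwise' univ (fun d => (pos d, lab d)) (fun p => f p.1 p.2),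
    Fintype.sum_prod_type, Fintype.sum_bool]
  simp only [← sum_add_distrib, sum_const]
  congr! 4 <;> simp [posCount, negCount, Prod.ext_iff]

theorem sum_labelWeight_mul_ite (i : Fin k) (t : ℝ) (a b : Fin k → ℝ) :
    ∑ d, ((if pos d = true ∧ lab d = i then (1 : ℝ) else 0) + t
        - (if pos d = false ∧ lab d = i then (1 : ℝ) else 0))
        * (if pos d = true then a (lab d) else b (lab d))
      = t * ∑ l, (posCount pos lab l : ℝ) * a l + posCount pos lab i * a i
        + t * ∑ l, (negCount pos lab l : ℝ) * b l - negCount pos lab i * b i := by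
  rw [sum_comp_pos_lab pos lab fun p l => ((if p = true ∧ l = i then (1 : ℝ) else 0) + t
        - (if p = false ∧ l = i then (1 : ℝ) else 0)) * (if p = true then a l else b l)]
  simp only [nsmul_eq_mul, Bool.true_eq_false, Bool.false_eq_true, true_and, false_and,
    if_true, if_false, sub_zero, zero_add]
  have per_label : ∀ l, (posCount pos lab l : ℝ) * (((if l = i then 1 else 0) + t) * a l)
        + negCount pos lab l * ((t - if l = i then 1 else 0) * b l)
      = t * (posCount pos lab l * a l) + t * (negCount pos lab l * b l)
        + if l = i then posCount pos lab l * a l - negCount pos lab l * b l else 0 := by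
    intro l
    split_ifs <;> ring
  rw [sum_congr rfl fun l _ => per_label l, sum_add_distrib, sum_add_distrib, ← mul_sum,
    ← mul_sum, sum_ite_eq']
  simp only [mem_univ, if_true]
  ring

end Labels

theorem L2_estimator_expectation_general {Ω : Type*} [MeasurableSpace Ω]
    (μ : Measure Ω)
    {k v : ℕ}
    (θ : Fin k → Fin v → ℝ)
    (m : ℕ) (hm : 1 ≤ m) (t : ℝ) (j : Fin v) (i : Fin k)
    (n : ℕ) (x : Fin n → Ω → ℝ)
    (pos : Fin n → Bool) (lab : Fin n → Fin k)
    (hint : ∀ d, Integrable (x d) μ)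
    (hmean_pos : ∀ d, pos d = true → ∫ ω, x d ω ∂μ = (m : ℝ) * θ (lab d) j)
    (hmean_neg : ∀ d, pos d = false →
      ∫ ω, x d ω ∂μ = (m : ℝ) * ((∑ b, θ b j) - θ (lab d) j) / ((k : ℝ) - 1)) :
    ∫ ω, (∑ d, ((if pos d = true ∧ lab d = i then (1 : ℝ) else 0) + t
            - (if pos d = false ∧ lab d = i then (1 : ℝ) else 0)) * x d ω)
        / ((m : ℝ) * n * ((posCount pos lab i : ℝ) / n
            - (negCount pos lab i : ℝ) / n + t)) ∂μ
      = (t * ∑ l, ((posCount pos lab l : ℝ) / n) * θ l j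
          + ((posCount pos lab i : ℝ) / n) * θ i j
          + t * ∑ l, ((negCount pos lab l : ℝ) / n)
              * ((∑ b, θ b j) - θ l j) / ((k : ℝ) - 1)
          - ((negCount pos lab i : ℝ) / n)
              * ((∑ b, θ b j) - θ i j) / ((k : ℝ) - 1))
        / ((posCount pos lab i : ℝ) / n - (negCount pos lab i : ℝ) / n + t) := by
  have hmean : ∀ d, ∫ ω, x d ω ∂μ = m * if pos d = true then θ (lab d) j
      else ((∑ b, θ b j) - θ (lab d) j) / ((k : ℝ) - 1) := by
    intro d
    cases h : pos d
    · simp [hmean_neg d h, mul_div_assoc]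
    · simp [hmean_pos d h]
  have hm0 : (m : ℝ) ≠ 0 := by exact_mod_cast Nat.one_le_iff_ne_zero.mp hm
  rw [integral_div, integral_finsetSum _ fun d _ => (hint d).const_mul _]
  simp_rw [integral_const_mul, hmean, mul_left_comm _ (m : ℝ), ← mul_sum]
  rw [sum_labelWeight_mul_ite pos lab i t (θ · j)
      fun l => ((∑ b, θ b j) - θ l j) / ((k : ℝ) - 1),
    mul_assoc (m : ℝ), mul_div_mul_left _ _ hm0, ← div_div]
  congr 1
  simp only [mul_div_assoc]
  simp only [div_mul_eq_mul_div, ← sum_div]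
  ring

/-- Exact expectation of the L2 (likelihood-ratio) estimator (Theorem 3, part 1).
Each document `d` is either positively labelled into exactly one class `lab d`
(when `pos d = true`, with `E[x d] = m θ_{lab d, j}`) or negatively labelled as
not in class `lab d` (when `pos d = false`, with `E[x d] = m M_{lab d} / (k-1)`
where `M_l = ∑ b, θ_{b j} - θ_{l j}`). With `y_i(d), z_i(d)` the indicators of
being positively/negatively labelled w.r.t. class `i`, `C_l, D_l` the label
counts, `p_l = C_l / n`, `q_l = D_l / n`, the estimator
`θ̂ = ∑ d, (y_i(d) + t - z_i(d)) x d / (m n (p_i - q_i + t))` has expectation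
`(t ∑ l, p_l θ_{l j} + p_i θ_{i j} + t ∑ l, q_l M_l/(k-1) - q_i M_i/(k-1))
  / (p_i - q_i + t)`. -/
theorem L2_estimator_expectation {Ω : Type*} [MeasurableSpace Ω]
    (μ : Measure Ω) [IsProbabilityMeasure μ]
    {k v : ℕ} (hk : 2 ≤ k)
    (θ : Fin k → Fin v → ℝ)
    (hθ0 : ∀ l j', 0 ≤ θ l j') (hθ1 : ∀ l, ∑ j', θ l j' = 1)
    (m : ℕ) (hm : 1 ≤ m) (t : ℝ) (ht : 1 < t) (j : Fin v) (i : Fin k)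
    (n : ℕ) (hn : 1 ≤ n) (x : Fin n → Ω → ℝ)
    (pos : Fin n → Bool) (lab : Fin n → Fin k)
    (hindep : iIndepFun x μ)
    (hint : ∀ d, Integrable (x d) μ)
    (hmean_pos : ∀ d, pos d = true → ∫ ω, x d ω ∂μ = (m : ℝ) * θ (lab d) j)
    (hmean_neg : ∀ d, pos d = false →
      ∫ ω, x d ω ∂μ = (m : ℝ) * ((∑ b, θ b j) - θ (lab d) j) / ((k : ℝ) - 1)) :
    ∫ ω, (∑ d, ((if pos d = true ∧ lab d = i then (1 : ℝ) else 0) + t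
            - (if pos d = false ∧ lab d = i then (1 : ℝ) else 0)) * x d ω)
        / ((m : ℝ) * n * ((posCount pos lab i : ℝ) / n
            - (negCount pos lab i : ℝ) / n + t)) ∂μ
      = (t * ∑ l, ((posCount pos lab l : ℝ) / n) * θ l j
          + ((posCount pos lab i : ℝ) / n) * θ i j
          + t * ∑ l, ((negCount pos lab l : ℝ) / n)
              * ((∑ b, θ b j) - θ l j) / ((k : ℝ) - 1)
          - ((negCount pos lab i : ℝ) / n)
              * ((∑ b, θ b j) - θ i j) / ((k : ℝ) - 1))
        / ((posCount pos lab i : ℝ) / n - (negCount pos lab i : ℝ) / n + t) :=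
  L2_estimator_expectation_general μ θ m hm t j i n x pos lab hint hmean_pos hmean_neg
end

section
/- Fix k ≥ 2 classes with parameters θ_1, …, θ_k in the probability simplex of ℝ^v, m ≥ 1, t > 1, a word index j and a class index i. Let x_1, …, x_n (n ≥ 1) be independent real random variables with fixed label functions y_i, z_i : {1, …, n} → {0, 1} as follows: each document d is either positively labelled into exactly one class l, with Var(x_d) = m·θ_{l j}(1 − θ_{l j}), or negatively labelled as not in exactly one class l, with Var(x_d) = m·(Σ_{b ≠ l} θ_{b j}(1 − θ_{b j}))/(k − 1)². Let C_l, D_l count the documents positively labelled into class l and negatively labelled as not in class l, with Σ_l (C_l + D_l) = n; set p_l = C_l/n, q_l = D_l/n. Define θ̂^{L2} := Σ_{d=1}^n (y_i(d) + t − z_i(d))·x_d / (m·n·(p_i − q_i + t)). Then Var(θ̂^{L2}) = [(1 + 2t)·p_i·θ_{i j}(1 − θ_{i j}) + (1 − 2t)·(q_i/(k − 1)²)·Σ_{l ≠ i} θ_{l j}(1 − θ_{l j}) + t²·Σ_{l=1}^k p_l·θ_{l j}(1 − θ_{l j}) + t²·Σ_{l=1}^k (q_l/(k − 1)²)·Σ_{b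 ≠ l} θ_{b j}(1 − θ_{b j})] / (m·n·(p_i − q_i + t)²). -/
open MeasureTheory ProbabilityTheory Finset

/-!
By independence, the variance of `∑ d, c_d x_d` is `∑ d, c_d² Var(x_d)`. The weight `c_d` is
`1 + t` on documents labelled into class `i`, `t - 1` on those labelled out of it and `t`
otherwise, so `c_d² = t² + (1 + 2t)·[y_i(d)] + (1 - 2t)·[z_i(d)]`. Grouping the documents by
their label turns the sum into `C_l`, `D_l`-weighted sums over classes, and dividing by the
squared normalisation `(m n (p_i - q_i + t))²` gives the formula.
-/

namespace ProbabilityTheory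

variable {Ω ι : Type*} {mΩ : MeasurableSpace Ω} {μ : Measure Ω}

lemma variance_div_const (X : Ω → ℝ) (c : ℝ) :
    variance (fun ω => X ω / c) μ = variance X μ / c ^ 2 := by
  simp_rw [div_eq_mul_inv, variance_mul_const, inv_pow]

lemma iIndepFun.variance_sum_const_mul {X : ι → Ω → ℝ} (hX : iIndepFun X μ)
    (hmem : ∀ i, MemLp (X i) 2 μ) (s : Finset ι) (c : ι → ℝ) :
    variance (fun ω => ∑ i ∈ s, c i * X i ω) μ = ∑ i ∈ s, c i ^ 2 * variance (X i) μ := by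
  simpa [Finset.sum_fn, variance_const_mul] using
    IndepFun.variance_sum (s := s) (X := fun i ω => c i * X i ω)
      (fun i _ => (hmem i).const_mul (c i))
      (fun a _ b _ hab => (hX.indepFun hab).comp (measurable_const_mul _) (measurable_const_mul _))

end ProbabilityTheory

lemma sum_eq_sum_posCount_smul_add_negCount_smul {n k : ℕ} {M : Type*} [AddCommMonoid M]
    (pos : Fin n → Bool) (lab : Fin n → Fin k) (f : Bool → Fin k → M) :
    ∑ d, f (pos d) (lab d)
      = ∑ l, (posCount pos lab l • f true l + negCount pos lab l • f false l) := by
  rw [← Finset.sum_fiberwise' univ (fun d => (pos d, lab d)) (fun p => f p.1 p.2),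
    Fintype.sum_prod_type_right]
  simp [posCount, negCount]

lemma mul_div_mul_sq {K : Type*} [Field K] (a b c : K) :
    a * b / (a * c) ^ 2 = b / (a * c ^ 2) := by
  rcases eq_or_ne a 0 with rfl | ha
  · simp
  · rw [mul_pow, sq a, mul_assoc a a, mul_div_mul_left _ _ ha]

lemma sum_mul_ite_add_sq_add_mul_sub_ite_sq {ι : Type*} [Fintype ι] [DecidableEq ι]
    (C D S R : ι → ℝ) (i : ι) (t : ℝ) :
    ∑ l, (C l * (((if l = i then 1 else 0) + t) ^ 2 * S l)
        + D l * ((t - if l = i then 1 else 0) ^ 2 * R l))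
      = t ^ 2 * ∑ l, (C l * S l + D l * R l)
        + ((1 + 2 * t) * C i * S i + (1 - 2 * t) * D i * R i) := by
  calc _ = ∑ l, (t ^ 2 * (C l * S l + D l * R l)
          + if l = i then (1 + 2 * t) * C l * S l + (1 - 2 * t) * D l * R l else 0) :=
        sum_congr rfl fun l _ => by by_cases h : l = i <;> simp [h] <;> ring
    _ = _ := by rw [sum_add_distrib, ← mul_sum, Fintype.sum_ite_eq']

theorem L2_estimator_variance_general {Ω : Type*} [MeasurableSpace Ω]
    (μ : Measure Ω)
    {k v : ℕ}
    (θ : Fin k → Fin v → ℝ)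
    (m : ℕ) (t : ℝ) (j : Fin v) (i : Fin k)
    (n : ℕ) (hn : 1 ≤ n) (x : Fin n → Ω → ℝ)
    (pos : Fin n → Bool) (lab : Fin n → Fin k)
    (hindep : iIndepFun x μ)
    (hmem : ∀ d, MemLp (x d) 2 μ)
    (hvar_pos : ∀ d, pos d = true →
      variance (x d) μ = (m : ℝ) * θ (lab d) j * (1 - θ (lab d) j))
    (hvar_neg : ∀ d, pos d = false →
      variance (x d) μ
        = (m : ℝ) * (∑ b ∈ Finset.univ.erase (lab d), θ b j * (1 - θ b j))
            / ((k : ℝ) - 1) ^ 2) :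
    variance (fun ω =>
        (∑ d, ((if pos d = true ∧ lab d = i then (1 : ℝ) else 0) + t
            - (if pos d = false ∧ lab d = i then (1 : ℝ) else 0)) * x d ω)
          / ((m : ℝ) * n * ((posCount pos lab i : ℝ) / n
              - (negCount pos lab i : ℝ) / n + t))) μ
      = ((1 + 2 * t) * ((posCount pos lab i : ℝ) / n) * θ i j * (1 - θ i j)
          + (1 - 2 * t) * (((negCount pos lab i : ℝ) / n) / ((k : ℝ) - 1) ^ 2)
              * ∑ l ∈ Finset.univ.erase i, θ l j * (1 - θ l j)
          + t ^ 2 * ∑ l, ((posCount pos lab l : ℝ) / n) * θ l j * (1 - θ l j)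
          + t ^ 2 * ∑ l, (((negCount pos lab l : ℝ) / n) / ((k : ℝ) - 1) ^ 2)
              * ∑ b ∈ Finset.univ.erase l, θ b j * (1 - θ b j))
        / ((m : ℝ) * n * ((posCount pos lab i : ℝ) / n
            - (negCount pos lab i : ℝ) / n + t) ^ 2) := by
  set C : Fin k → ℝ := fun l => posCount pos lab l
  set D : Fin k → ℝ := fun l => negCount pos lab l
  set S : Fin k → ℝ := fun l => θ l j * (1 - θ l j)
  set R : Fin k → ℝ := fun l => (∑ b ∈ univ.erase l, S b) / ((k : ℝ) - 1) ^ 2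
  set F : Bool → Fin k → ℝ := fun b l =>
    ((if b = true ∧ l = i then 1 else 0) + t - (if b = false ∧ l = i then 1 else 0)) ^ 2
      * if b then S l else R l
  have hdoc : ∀ d, ((if pos d = true ∧ lab d = i then (1 : ℝ) else 0) + t
      - (if pos d = false ∧ lab d = i then (1 : ℝ) else 0)) ^ 2 * variance (x d) μ
      = m * F (pos d) (lab d) := by
    intro d
    cases h : pos d
    · rw [hvar_neg d h]; simp [F, R, S]; ring
    · rw [hvar_pos d h]; simp [F, S]; ring
  have hclass : ∑ l, (posCount pos lab l • F true l + negCount pos lab l • F false l)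
      = t ^ 2 * ∑ l, (C l * S l + D l * R l)
        + ((1 + 2 * t) * C i * S i + (1 - 2 * t) * D i * R i) := by
    simpa [F] using sum_mul_ite_add_sq_add_mul_sub_ite_sq C D S R i t
  have hpos : ∑ l, (C l / n) * θ l j * (1 - θ l j) = (∑ l, C l * S l) / n := by
    rw [sum_div]; exact sum_congr rfl fun l _ => by ring
  have hneg : ∑ l, (D l / n) / ((k : ℝ) - 1) ^ 2 * ∑ b ∈ univ.erase l, S b
      = (∑ l, D l * R l) / n := by
    rw [sum_div]; exact sum_congr rfl fun l _ => by ring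
  have hn0 : (n : ℝ) ≠ 0 := by positivity
  rw [variance_div_const, hindep.variance_sum_const_mul hmem, sum_congr rfl fun d _ => hdoc d,
    ← mul_sum, sum_eq_sum_posCount_smul_add_negCount_smul pos lab F, hclass, hpos, hneg,
    ← mul_div_mul_sq ((m : ℝ) * n)]
  congr 1
  simp only [C, D, R, S, sum_add_distrib]
  field_simp
  ring

/-- Exact variance of the L2 (likelihood-ratio) estimator (Theorem 3, part 2).
Each document `d` is either positively labelled into exactly one class `lab d`
(when `pos d = true`, with `Var(x d) = m θ_{lab d, j} (1 - θ_{lab d, j})`) or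
negatively labelled as not in class `lab d` (when `pos d = false`, with
`Var(x d) = m ∑_{b ≠ lab d} θ_{b j} (1 - θ_{b j}) / (k-1)²`). With `y_i, z_i`
the class-`i` label indicators, `C_l, D_l` the label counts, `p_l = C_l / n`,
`q_l = D_l / n`, the estimator
`θ̂ = ∑ d, (y_i(d) + t - z_i(d)) x d / (m n (p_i - q_i + t))` has variance
`((1+2t) p_i θ_{i j}(1-θ_{i j}) + (1-2t) (q_i/(k-1)²) ∑_{l≠i} θ_{l j}(1-θ_{l j})
  + t² ∑ l, p_l θ_{l j}(1-θ_{l j})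
  + t² ∑ l, (q_l/(k-1)²) ∑_{b≠l} θ_{b j}(1-θ_{b j})) / (m n (p_i - q_i + t)²)`. -/
theorem L2_estimator_variance {Ω : Type*} [MeasurableSpace Ω]
    (μ : Measure Ω) [IsProbabilityMeasure μ]
    {k v : ℕ} (hk : 2 ≤ k)
    (θ : Fin k → Fin v → ℝ)
    (hθ0 : ∀ l j', 0 ≤ θ l j') (hθ1 : ∀ l, ∑ j', θ l j' = 1)
    (m : ℕ) (hm : 1 ≤ m) (t : ℝ) (ht : 1 < t) (j : Fin v) (i : Fin k)
    (n : ℕ) (hn : 1 ≤ n) (x : Fin n → Ω → ℝ)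
    (pos : Fin n → Bool) (lab : Fin n → Fin k)
    (hindep : iIndepFun x μ)
    (hmem : ∀ d, MemLp (x d) 2 μ)
    (hvar_pos : ∀ d, pos d = true →
      variance (x d) μ = (m : ℝ) * θ (lab d) j * (1 - θ (lab d) j))
    (hvar_neg : ∀ d, pos d = false →
      variance (x d) μ
        = (m : ℝ) * (∑ b ∈ Finset.univ.erase (lab d), θ b j * (1 - θ b j))
            / ((k : ℝ) - 1) ^ 2) :
    variance (fun ω =>
        (∑ d, ((if pos d = true ∧ lab d = i then (1 : ℝ) else 0) + t
            - (if pos d = false ∧ lab d = i then (1 : ℝ) else 0)) * x d ω)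
          / ((m : ℝ) * n * ((posCount pos lab i : ℝ) / n
              - (negCount pos lab i : ℝ) / n + t))) μ
      = ((1 + 2 * t) * ((posCount pos lab i : ℝ) / n) * θ i j * (1 - θ i j)
          + (1 - 2 * t) * (((negCount pos lab i : ℝ) / n) / ((k : ℝ) - 1) ^ 2)
              * ∑ l ∈ Finset.univ.erase i, θ l j * (1 - θ l j)
          + t ^ 2 * ∑ l, ((posCount pos lab l : ℝ) / n) * θ l j * (1 - θ l j)
          + t ^ 2 * ∑ l, (((negCount pos lab l : ℝ) / n) / ((k : ℝ) - 1) ^ 2)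
              * ∑ b ∈ Finset.univ.erase l, θ b j * (1 - θ b j))
        / ((m : ℝ) * n * ((posCount pos lab i : ℝ) / n
            - (negCount pos lab i : ℝ) / n + t) ^ 2) :=
  L2_estimator_variance_general μ θ m t j i n hn x pos lab hindep hmem hvar_pos hvar_neg
end

section
/- Fix k ≥ 2 classes with parameters θ_1, …, θ_k in the probability simplex of ℝ^v, m ≥ 1, t > 1, a word index j and a class index i. Let x_1, …, x_n (n ≥ 1) be independent real random variables, where each document d belongs to exactly one class l(d) and E[x_d] = m·θ_{l(d) j}; let C_l be the number of documents of class l, with Σ_l C_l = n, and let y_i(d) = 1 if l(d) = i and 0 otherwise. Define the self-corrected estimator θ̂* := Σ_{d=1}^n (2·y_i(d) + t − 1)·x_d / (m·(2·C_i + (t − 1)·n)). Then E[θ̂*] = (2·C_i·θ_{i j} + (t − 1)·Σ_{l=1}^k C_l·θ_{l j}) / (2·C_i + (t − 1)·n), and consequently the bias is E[θ̂*] − θ_{i j} = (t − 1)·Σ_{l=1}^k C_l·(θ_{l j} − θ_{i j}) / (2·C_i + (t − 1)·n). -/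
/-!
By linearity the expectation only sees the means `m θ_{lab d, j}`. Grouping the documents by
class turns the weighted sum of these means into `m (2 C_i θ_{ij} + (t - 1) ∑_l C_l θ_{lj})`,
and the bias formula follows from `∑_l C_l = n`.
-/

open MeasureTheory ProbabilityTheory Finset

/-- Number of documents belonging to class `l`. -/
def classCount {n k : ℕ} (lab : Fin n → Fin k) (l : Fin k) : ℕ :=
  (Finset.univ.filter fun d => lab d = l).card

section ClassCount

variable {n k : ℕ} (lab : Fin n → Fin k)

theorem sum_comp_eq_sum_classCount_smul {M : Type*} [AddCommMonoid M] (f : Fin k → M) :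
    ∑ d, f (lab d) = ∑ l, classCount lab l • f l := by
  rw [← Finset.sum_fiberwise' univ lab f]
  simp only [sum_const, classCount]

theorem sum_classCount : ∑ l, classCount lab l = n := by
  simpa using (sum_comp_eq_sum_classCount_smul lab fun _ => (1 : ℕ)).symm

theorem sum_selfCorrected_weight_mul {R : Type*} [CommRing R] (i : Fin k) (t : R)
    (g : Fin k → R) :
    ∑ d, (2 * (if lab d = i then (1 : R) else 0) + t - 1) * g (lab d)
      = 2 * (classCount lab i : R) * g i + (t - 1) * ∑ l, (classCount lab l : R) * g l := by
  rw [sum_comp_eq_sum_classCount_smul lab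
    fun l => (2 * (if l = i then (1 : R) else 0) + t - 1) * g l]
  have split_weight : ∀ l,
      (classCount lab l : R) * ((2 * (if l = i then 1 else 0) + t - 1) * g l)
        = 2 * (if i = l then (classCount lab l : R) * g l else 0)
          + (t - 1) * ((classCount lab l : R) * g l) := by
    intro l
    by_cases h : l = i
    · simp only [h, if_true]; ring
    · simp only [h, Ne.symm h, if_false]; ring
  simp only [nsmul_eq_mul, split_weight, sum_add_distrib, ← mul_sum, sum_ite_eq, mem_univ,
    if_true, mul_assoc]

end ClassCount

theorem integral_sum_const_mul {Ω ι : Type*} [MeasurableSpace Ω] [Fintype ι] (μ : Measure Ω)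
    (w : ι → ℝ) (x : ι → Ω → ℝ) (hx : ∀ d, Integrable (x d) μ) :
    ∫ ω, ∑ d, w d * x d ω ∂μ = ∑ d, w d * ∫ ω, x d ω ∂μ := by
  rw [integral_finsetSum _ fun d _ => (hx d).const_mul (w d)]
  simp only [integral_const_mul]

theorem selfCorrected_mean_sub_eq {ι : Type*} [Fintype ι] (C θ : ι → ℝ) (i : ι) (c t N : ℝ)
    (hC : ∑ l, C l = N) (hD : 2 * c + (t - 1) * N ≠ 0) :
    (2 * c * θ i + (t - 1) * ∑ l, C l * θ l) / (2 * c + (t - 1) * N) - θ i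
      = (t - 1) * (∑ l, C l * (θ l - θ i)) / (2 * c + (t - 1) * N) := by
  rw [div_sub' hD, ← hC]
  congr 1
  simp only [mul_sub, sum_sub_distrib, ← sum_mul]
  ring

theorem self_corrected_estimator_expectation_general {Ω : Type*} [MeasurableSpace Ω]
    (μ : Measure Ω)
    {k v : ℕ}
    (θ : Fin k → Fin v → ℝ)
    (m : ℕ) (hm : 1 ≤ m) (t : ℝ) (ht : 1 < t) (j : Fin v) (i : Fin k)
    (n : ℕ) (hn : 1 ≤ n) (x : Fin n → Ω → ℝ) (lab : Fin n → Fin k)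
    (hint : ∀ d, Integrable (x d) μ)
    (hmean : ∀ d, ∫ ω, x d ω ∂μ = (m : ℝ) * θ (lab d) j) :
    (∫ ω, (∑ d, (2 * (if lab d = i then (1 : ℝ) else 0) + t - 1) * x d ω)
        / ((m : ℝ) * (2 * (classCount lab i : ℝ) + (t - 1) * n)) ∂μ)
      = (2 * (classCount lab i : ℝ) * θ i j
          + (t - 1) * ∑ l, (classCount lab l : ℝ) * θ l j)
        / (2 * (classCount lab i : ℝ) + (t - 1) * n) ∧
    (∫ ω, (∑ d, (2 * (if lab d = i then (1 : ℝ) else 0) + t - 1) * x d ω)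
        / ((m : ℝ) * (2 * (classCount lab i : ℝ) + (t - 1) * n)) ∂μ) - θ i j
      = (t - 1) * (∑ l, (classCount lab l : ℝ) * (θ l j - θ i j))
        / (2 * (classCount lab i : ℝ) + (t - 1) * n) := by
  have hD : 2 * (classCount lab i : ℝ) + (t - 1) * n ≠ 0 := by
    have : (0 : ℝ) < (t - 1) * n := mul_pos (by linarith) (by exact_mod_cast hn)
    positivity
  have hm0 : (m : ℝ) ≠ 0 := Nat.cast_ne_zero.2 (by omega)
  have hexp : (∫ ω, (∑ d, (2 * (if lab d = i then (1 : ℝ) else 0) + t - 1) * x d ω)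
        / ((m : ℝ) * (2 * (classCount lab i : ℝ) + (t - 1) * n)) ∂μ)
      = (2 * (classCount lab i : ℝ) * θ i j + (t - 1) * ∑ l, (classCount lab l : ℝ) * θ l j)
        / (2 * (classCount lab i : ℝ) + (t - 1) * n) := by
    rw [integral_div, integral_sum_const_mul μ _ x hint]
    simp only [hmean, mul_left_comm _ (m : ℝ), ← mul_sum]
    rw [sum_selfCorrected_weight_mul lab i t fun l => θ l j, mul_div_mul_left _ _ hm0]
  refine ⟨hexp, ?_⟩
  rw [hexp]
  exact selfCorrected_mean_sub_eq (fun l => (classCount lab l : ℝ)) (θ · j) i _ t n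
    (mod_cast sum_classCount lab) hD

/-- Expectation and bias of the self-corrected estimator (Corollary 1,
expectation/bias part). Each document `d` belongs to exactly one class `lab d`
with `E[x d] = m θ_{lab d, j}`; `C_l` counts the documents of class `l` and
`y_i(d)` indicates `lab d = i`. The estimator
`θ̂* = ∑ d, (2 y_i(d) + t - 1) x d / (m (2 C_i + (t - 1) n))` satisfies
`E[θ̂*] = (2 C_i θ_{i j} + (t - 1) ∑ l, C_l θ_{l j}) / (2 C_i + (t - 1) n)` and
`E[θ̂*] - θ_{i j} = (t - 1) ∑ l, C_l (θ_{l j} - θ_{i j}) / (2 C_i + (t - 1) n)`. -/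
theorem self_corrected_estimator_expectation {Ω : Type*} [MeasurableSpace Ω]
    (μ : Measure Ω) [IsProbabilityMeasure μ]
    {k v : ℕ} (hk : 2 ≤ k)
    (θ : Fin k → Fin v → ℝ)
    (hθ0 : ∀ l j', 0 ≤ θ l j') (hθ1 : ∀ l, ∑ j', θ l j' = 1)
    (m : ℕ) (hm : 1 ≤ m) (t : ℝ) (ht : 1 < t) (j : Fin v) (i : Fin k)
    (n : ℕ) (hn : 1 ≤ n) (x : Fin n → Ω → ℝ) (lab : Fin n → Fin k)
    (hindep : iIndepFun x μ)
    (hint : ∀ d, Integrable (x d) μ)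
    (hmean : ∀ d, ∫ ω, x d ω ∂μ = (m : ℝ) * θ (lab d) j) :
    (∫ ω, (∑ d, (2 * (if lab d = i then (1 : ℝ) else 0) + t - 1) * x d ω)
        / ((m : ℝ) * (2 * (classCount lab i : ℝ) + (t - 1) * n)) ∂μ)
      = (2 * (classCount lab i : ℝ) * θ i j
          + (t - 1) * ∑ l, (classCount lab l : ℝ) * θ l j)
        / (2 * (classCount lab i : ℝ) + (t - 1) * n) ∧
    (∫ ω, (∑ d, (2 * (if lab d = i then (1 : ℝ) else 0) + t - 1) * x d ω)
        / ((m : ℝ) * (2 * (classCount lab i : ℝ) + (t - 1) * n)) ∂μ) - θ i j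
      = (t - 1) * (∑ l, (classCount lab l : ℝ) * (θ l j - θ i j))
        / (2 * (classCount lab i : ℝ) + (t - 1) * n) :=
  self_corrected_estimator_expectation_general μ θ m hm t ht j i n hn x lab hint hmean
end
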